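/- Let u, v : ℝ³ → ℝ be smooth functions of (x, y, t). Consider ℝ⁴ with coordinates (x, y, t, λ) and the vector fields X₁ = ∂_y − (λ + v_x)∂_x − u_x ∂_λ and X₂ = ∂_t − (λ² + v_x λ − u + v_y)∂_x − (u_x λ + u_y)∂_λ (the partial derivatives of u and v being evaluated at (x,y,t)). Then the Lie bracket satisfies, at every point of ℝ⁴, [X₁, X₂] = P(v) ∂_x + (P(u) + u_x²) ∂_λ, where P = ∂_x∂_t − ∂_y² + (u − v_y)∂_x² + v_x ∂_x∂_y. In particular, X₁ and X₂ commute identically on ℝ⁴ if and only if (u, v) satisfies the Manakov–Santini system P(u) + u_x² = 0, P(v) = 0. -/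

import Mathlib

/-! Each Lax field has constant `y` and `t` components, so `[X₁, X₂]` has only `x` and `λ`
components. The other components of the fields are polynomials in `λ` whose coefficients are
functions of `(x, y, t)`, which the chain rule differentiates through the linear projection
`π3`. Once the mixed partials are put in a common order (symmetry of second derivatives), the
terms in `λ` cancel and what remains is `P(v)` and `P(u) + u_x²`. -/

noncomputable section

/-- Partial derivative of `f` along the `i`-th coordinate direction on `ℝⁿ`.
Coordinates on `ℝ³` are `(x, y, t) = (0, 1, 2)`; on `ℝ⁴` they are
`(x, y, t, λ) = (0, 1, 2, 3)`. -/
def pd {n : ℕ} (i : Fin n) (f : (Fin n → ℝ) → ℝ) : (Fin n → ℝ) → ℝ :=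
  fun x => fderiv ℝ f x (Pi.single i 1)

/-- Lie bracket of vector fields on `ℝⁿ`:
`[X,Y](p) = (DY)(p)(X(p)) − (DX)(p)(Y(p))`. -/
def lieBr {n : ℕ} (X Y : (Fin n → ℝ) → (Fin n → ℝ)) :
    (Fin n → ℝ) → (Fin n → ℝ) :=
  fun p => fderiv ℝ Y p (X p) - fderiv ℝ X p (Y p)

/-- Projection `(x, y, t, λ) ↦ (x, y, t)`. -/
def π3 (p : Fin 4 → ℝ) : Fin 3 → ℝ := ![p 0, p 1, p 2]

/-- The operator `P = ∂_x∂_t − ∂_y² + (u − v_y)∂_x² + v_x ∂_x∂_y` applied to `h`. -/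
def Pop (u v h : (Fin 3 → ℝ) → ℝ) : (Fin 3 → ℝ) → ℝ :=
  fun x =>
    pd 0 (pd 2 h) x - pd 1 (pd 1 h) x + (u x - pd 1 v x) * pd 0 (pd 0 h) x
      + pd 0 v x * pd 0 (pd 1 h) x

/-- `X₁ = ∂_y − (λ + v_x)∂_x − u_x ∂_λ` as a vector field on `ℝ⁴`. -/
def msLax1 (u v : (Fin 3 → ℝ) → ℝ) : (Fin 4 → ℝ) → (Fin 4 → ℝ) :=
  fun p => ![-(p 3 + pd 0 v (π3 p)), 1, 0, -(pd 0 u (π3 p))]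

/-- `X₂ = ∂_t − (λ² + v_x λ − u + v_y)∂_x − (u_x λ + u_y)∂_λ` as a vector field on `ℝ⁴`. -/
def msLax2 (u v : (Fin 3 → ℝ) → ℝ) : (Fin 4 → ℝ) → (Fin 4 → ℝ) :=
  fun p =>
    ![-((p 3) ^ 2 + pd 0 v (π3 p) * p 3 - u (π3 p) + pd 1 v (π3 p)), 0, 1,
      -(pd 0 u (π3 p) * p 3 + pd 1 u (π3 p))]

section PartialDerivatives

variable {n : ℕ} {f : (Fin n → ℝ) → ℝ}

theorem ContDiff.pd {k m : WithTop ℕ∞} (hf : ContDiff ℝ k f) (hmk : m + 1 ≤ k) (i : Fin n) :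
    ContDiff ℝ m (pd i f) :=
  (hf.fderiv_right hmk).clm_apply contDiff_const

theorem pd_pd_comm {x : Fin n → ℝ} (hf : ContDiffAt ℝ 2 f x) (i j : Fin n) :
    pd i (pd j f) x = pd j (pd i f) x := by
  have hd : DifferentiableAt ℝ (fderiv ℝ f) x :=
    (hf.fderiv_right (m := 1) (by norm_num)).differentiableAt one_ne_zero
  have hsecond : ∀ a b : Fin n,
      pd a (pd b f) x = fderiv ℝ (fderiv ℝ f) x (Pi.single a 1) (Pi.single b 1) := by
    intro a b
    rw [pd, show pd b f = fun y => fderiv ℝ f y (Pi.single b 1) from rfl,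
      fderiv_clm_apply hd (differentiableAt_const _)]
    simp
  rw [hsecond, hsecond]
  exact (hf.isSymmSndFDerivAt (by simp [minSmoothness_of_isRCLikeNormedField])).eq _ _

theorem fderiv_apply_eq_sum_pd (x w : Fin n → ℝ) :
    fderiv ℝ f x w = ∑ i, w i * pd i f x := by
  conv_lhs => rw [pi_eq_sum_univ' w]
  simp [pd]

end PartialDerivatives

def π3L : (Fin 4 → ℝ) →L[ℝ] (Fin 3 → ℝ) :=
  ContinuousLinearMap.pi ![.proj 0, .proj 1, .proj 2]

theorem coe_π3L : ⇑π3L = π3 := by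
  ext p j
  fin_cases j <;> rfl

theorem π3_surjective : Function.Surjective π3 := fun x =>
  ⟨![x 0, x 1, x 2, 0], by ext j; fin_cases j <;> rfl⟩

theorem hasFDerivAt_comp_π3 {g : (Fin 3 → ℝ) → ℝ} {p : Fin 4 → ℝ}
    (hg : DifferentiableAt ℝ g (π3 p)) :
    HasFDerivAt (fun q => g (π3 q)) ((fderiv ℝ g (π3 p)).comp π3L) p := by
  have h := (coe_π3L ▸ hg).hasFDerivAt.comp p π3L.hasFDerivAt
  rwa [coe_π3L] at h

theorem hasFDerivAt_vecCons₄ {E : Type*} [NormedAddCommGroup E] [NormedSpace ℝ E]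
    {f₀ f₁ f₂ f₃ : E → ℝ} {f₀' f₁' f₂' f₃' : E →L[ℝ] ℝ} {x : E}
    (h₀ : HasFDerivAt f₀ f₀' x) (h₁ : HasFDerivAt f₁ f₁' x) (h₂ : HasFDerivAt f₂ f₂' x)
    (h₃ : HasFDerivAt f₃ f₃' x) :
    HasFDerivAt (fun y => ![f₀ y, f₁ y, f₂ y, f₃ y])
      (.pi (φ := fun _ : Fin 4 => ℝ) ![f₀', f₁', f₂', f₃']) x := by
  refine hasFDerivAt_pi.2 fun i => ?_
  fin_cases i
  exacts [h₀, h₁, h₂, h₃]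

section LaxFields

variable {u v : (Fin 3 → ℝ) → ℝ} {p : Fin 4 → ℝ}

theorem fderiv_msLax1_apply (hux : DifferentiableAt ℝ (pd 0 u) (π3 p))
    (hvx : DifferentiableAt ℝ (pd 0 v) (π3 p)) (w : Fin 4 → ℝ) :
    fderiv ℝ (msLax1 u v) p w =
      ![-(w 3 + fderiv ℝ (pd 0 v) (π3 p) (π3 w)), 0, 0, -fderiv ℝ (pd 0 u) (π3 p) (π3 w)] := by
  have h : HasFDerivAt (msLax1 u v) _ p :=
    hasFDerivAt_vecCons₄ ((hasFDerivAt_apply 3 p).add (hasFDerivAt_comp_π3 hvx)).neg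
      (hasFDerivAt_const 1 p) (hasFDerivAt_const 0 p) (hasFDerivAt_comp_π3 hux).neg
  ext i
  fin_cases i <;> simp [h.fderiv, coe_π3L]

theorem fderiv_msLax2_apply (hu : DifferentiableAt ℝ u (π3 p))
    (hux : DifferentiableAt ℝ (pd 0 u) (π3 p)) (huy : DifferentiableAt ℝ (pd 1 u) (π3 p))
    (hvx : DifferentiableAt ℝ (pd 0 v) (π3 p)) (hvy : DifferentiableAt ℝ (pd 1 v) (π3 p))
    (w : Fin 4 → ℝ) :
    fderiv ℝ (msLax2 u v) p w =
      ![-(2 * p 3 * w 3 + fderiv ℝ (pd 0 v) (π3 p) (π3 w) * p 3 + pd 0 v (π3 p) * w 3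
          - fderiv ℝ u (π3 p) (π3 w) + fderiv ℝ (pd 1 v) (π3 p) (π3 w)), 0, 0,
        -(fderiv ℝ (pd 0 u) (π3 p) (π3 w) * p 3 + pd 0 u (π3 p) * w 3
          + fderiv ℝ (pd 1 u) (π3 p) (π3 w))] := by
  have hlam : HasFDerivAt (fun q : Fin 4 → ℝ => q 3) (.proj (R := ℝ) 3) p :=
    hasFDerivAt_apply 3 p
  have h : HasFDerivAt (msLax2 u v) _ p :=
    hasFDerivAt_vecCons₄
      ((((hlam.pow 2).add ((hasFDerivAt_comp_π3 hvx).mul hlam)).sub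
        (hasFDerivAt_comp_π3 hu)).add (hasFDerivAt_comp_π3 hvy)).neg
      (hasFDerivAt_const 0 p) (hasFDerivAt_const 1 p)
      (((hasFDerivAt_comp_π3 hux).mul hlam).add (hasFDerivAt_comp_π3 huy)).neg
  ext i
  fin_cases i <;>
    simp only [h.fderiv, ContinuousLinearMap.coe_pi', Matrix.cons_val, Matrix.cons_val_zero,
      Matrix.cons_val_one, Fin.isValue, Fin.zero_eta, Fin.mk_one, Fin.reduceFinMk, add_apply,
      neg_apply, sub_apply, smul_apply, zero_apply, ContinuousLinearMap.comp_apply,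
      ContinuousLinearMap.proj_apply, coe_π3L, smul_eq_mul, nsmul_eq_mul, pow_one,
      Nat.add_one_sub_one, Nat.cast_ofNat] <;>
    ring

theorem lieBr_msLax1_msLax2 (hu : ContDiff ℝ 2 u) (hv : ContDiff ℝ 2 v) (p : Fin 4 → ℝ) :
    lieBr (msLax1 u v) (msLax2 u v) p =
      ![Pop u v v (π3 p), 0, 0, Pop u v u (π3 p) + pd 0 u (π3 p) ^ 2] := by
  have hpd : ∀ {f : (Fin 3 → ℝ) → ℝ}, ContDiff ℝ 2 f → ∀ i, DifferentiableAt ℝ (pd i f) (π3 p) :=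
    fun hf i => (hf.pd (m := 1) (by norm_num) i).differentiable one_ne_zero _
  rw [lieBr, fderiv_msLax1_apply (hpd hu 0) (hpd hv 0),
    fderiv_msLax2_apply (hu.differentiable two_ne_zero _) (hpd hu 0) (hpd hu 1) (hpd hv 0)
      (hpd hv 1)]
  simp only [fderiv_apply_eq_sum_pd, Fin.sum_univ_three]
  rw [pd_pd_comm hu.contDiffAt 1 0, pd_pd_comm hu.contDiffAt 2 0, pd_pd_comm hv.contDiffAt 1 0,
    pd_pd_comm hv.contDiffAt 2 0]
  ext i
  fin_cases i <;>
    simp only [msLax1, msLax2, π3, Pop, Pi.sub_apply, Matrix.cons_val, Matrix.cons_val_zero,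
      Matrix.cons_val_one, Fin.isValue, Fin.zero_eta, Fin.mk_one, Fin.reduceFinMk, sub_self] <;>
    ring

end LaxFields

/-- For smooth `u, v`, the bracket of the Manakov–Santini Lax fields satisfies
`[X₁, X₂] = P(v) ∂_x + (P(u) + u_x²) ∂_λ` at every point of `ℝ⁴`; in particular
`X₁` and `X₂` commute identically iff `(u, v)` solves the Manakov–Santini system. -/
theorem manakov_santini_lax_bracket
    (u v : (Fin 3 → ℝ) → ℝ)
    (hu : ContDiff ℝ (⊤ : ℕ∞) u)
    (hv : ContDiff ℝ (⊤ : ℕ∞) v) :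
    (∀ p : Fin 4 → ℝ,
      lieBr (msLax1 u v) (msLax2 u v) p
        = ![Pop u v v (π3 p), 0, 0, Pop u v u (π3 p) + (pd 0 u (π3 p)) ^ 2]) ∧
    ((∀ p : Fin 4 → ℝ, lieBr (msLax1 u v) (msLax2 u v) p = 0) ↔
      (∀ x : Fin 3 → ℝ,
        Pop u v u x + (pd 0 u x) ^ 2 = 0 ∧ Pop u v v x = 0)) := by
  have hbracket := lieBr_msLax1_msLax2 (hu.of_le (by norm_cast)) (hv.of_le (by norm_cast))
  refine ⟨hbracket, ?_⟩
  rw [π3_surjective.forall]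
  refine forall_congr' fun p => ?_
  simp [hbracket p, and_comm]
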